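/- Leading small-t behaviour of the discrete form factor sum for p = 1: with kernel K(i,j) defined via Gauss hypergeometric functions as K(i,i) = lim_{j→i} of [((-1/2)_{i+1}(1/2)_{j+1}/(i!j!)) t^{(i+j)/2+1} (1/(i-j)) ( (1/(j+1)) ₂F₁(1/2,i+3/2;i+1;t) ₂F₁(1/2,j+1/2;j+2;t) - (1/(i+1)) ₂F₁(1/2,j+3/2;j+1;t) ₂F₁(1/2,i+1/2;i+2;t) )], one has K(i,i) ~ [(1/2)_{i+1}(-1/2)_{i+1}/((i+1)!)²] t^{i+1} as t → 0⁺; consequently Σ_{n₁ ≥ n} K(n₁,n₁) ~ [(1/2)_{n+1}(-1/2)_{n+1}/((n+1)!)²] t^{n+1} as t → 0⁺ for each fixed n ≥ 0. -/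

import Mathlib

open Real Filter Topology

/-- The Gauss hypergeometric function `₂F₁(a,b;c;t)` as a power series. -/
noncomputable def gaussHyp (a b c t : ℝ) : ℝ :=
  ∑' n : ℕ, ((ascPochhammer ℝ n).eval a * (ascPochhammer ℝ n).eval b /
    (ascPochhammer ℝ n).eval c) * t ^ n / (n.factorial : ℝ)

/-- The kernel expression `K(i,j)` (for integer `i` and real `j`, so that the diagonal
value can be taken as a limit `j → i`):
`K(i,j) = ((-1/2)_{i+1}(1/2)_{j+1}/(i! j!)) t^{(i+j)/2+1} (1/(i-j)) × [⋯]`,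
where `(1/2)_{j+1} = Γ(j+3/2)/Γ(1/2)` and `j! = Γ(j+1)`. -/
noncomputable def kernelExpr (i : ℕ) (j t : ℝ) : ℝ :=
  ((ascPochhammer ℝ (i + 1)).eval (-(1/2)) * (Real.Gamma (j + 3/2) / Real.Gamma (1/2)) /
      ((i.factorial : ℝ) * Real.Gamma (j + 1))) *
    t ^ (((i : ℝ) + j) / 2 + 1) * (1 / ((i : ℝ) - j)) *
    ((1 / (j + 1)) * gaussHyp (1/2) ((i : ℝ) + 3/2) ((i : ℝ) + 1) t *
        gaussHyp (1/2) (j + 1/2) (j + 2) t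
      - (1 / ((i : ℝ) + 1)) * gaussHyp (1/2) (j + 3/2) (j + 1) t *
        gaussHyp (1/2) ((i : ℝ) + 1/2) ((i : ℝ) + 2) t)

/-! Split `K(i, j) = A(j) · B(j)`, where the prefactor `A` is continuous at `j = i` with
`A(i) = (i+1)² c_i t^{i+1}` (`c_i = diagCoeff i`) and `B(j)` is the bracketed difference
quotient. Each of the four `₂F₁`'s is `₂F₁(1/2, v + d; v; t)` with `d ∈ {1/2, -3/2}`; its
`n`-th term is at most `(2t)ⁿ` and `n (2t)ⁿ`-Lipschitz in `v`, so `₂F₁ = 1 + O(t)` with an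
`O(t)` Lipschitz constant in the parameter. This gives `|B(j) - 1/(i+1)²| ≤ 48 t + 2 |i - j|`,
and letting `j → i`, `K(i,i) = c_i t^{i+1} (1 + O(t))`. The error is uniform enough
(`|K(m,m)| ≤ (4t)^{m+1}`) that the tail `∑_{m > n} K(m,m)` is `O(t^{n+2})`. -/

open Nat

section Pochhammer

lemma ascPochhammer_eval_nonneg {x : ℝ} (hx : 0 ≤ x) (n : ℕ) :
    0 ≤ (ascPochhammer ℝ n).eval x := by
  induction n with
  | zero => simp
  | succ n ih => rw [ascPochhammer_succ_eval]; positivity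

lemma ascPochhammer_eval_le_factorial {x : ℝ} (hx0 : 0 ≤ x) (hx1 : x ≤ 1) (n : ℕ) :
    (ascPochhammer ℝ n).eval x ≤ n ! := by
  induction n with
  | zero => simp
  | succ n ih =>
    rw [ascPochhammer_succ_eval, factorial_succ, cast_mul, mul_comm ((n + 1 : ℕ) : ℝ)]
    gcongr
    push_cast; linarith

lemma ascPochhammer_succ_eval_neg_half (n : ℕ) :
    (ascPochhammer ℝ (n + 1)).eval (-(1 / 2)) =
      -(1 / 2) * (ascPochhammer ℝ n).eval (1 / 2) := by
  rw [ascPochhammer_succ_left, Polynomial.eval_mul, Polynomial.eval_comp]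
  norm_num

noncomputable def pochhammerRatio (d v : ℝ) (n : ℕ) : ℝ :=
  (ascPochhammer ℝ n).eval (v + d) / (ascPochhammer ℝ n).eval v

variable {d v w : ℝ}

lemma pochhammerRatio_succ (n : ℕ) :
    pochhammerRatio d v (n + 1) = pochhammerRatio d v n * ((v + d + n) / (v + n)) := by
  simp only [pochhammerRatio, ascPochhammer_succ_eval, mul_div_mul_comm]

lemma add_nat_div_add_nat_mem_Icc (hv : 0 < v) (hd : |d| ≤ v) (k : ℕ) :
    (v + d + k) / (v + k) ∈ Set.Icc (0 : ℝ) 2 := by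
  obtain ⟨hd₁, hd₂⟩ := abs_le.mp hd
  have hk : (0 : ℝ) ≤ k := k.cast_nonneg
  constructor
  · apply div_nonneg <;> linarith
  · rw [div_le_iff₀ (by positivity)]; linarith

lemma abs_add_nat_div_add_nat_sub_le (hv : 0 < v) (hw : 0 < w) (hd : |d| ≤ v * w) (k : ℕ) :
    |(v + d + k) / (v + k) - (w + d + k) / (w + k)| ≤ |v - w| := by
  have hk : (0 : ℝ) ≤ k := k.cast_nonneg
  have hvk : 0 < v + k := by positivity
  have hwk : 0 < w + k := by positivity
  have hvw : v * w ≤ (v + k) * (w + k) := by nlinarith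
  rw [div_sub_div _ _ hvk.ne' hwk.ne', abs_div, abs_of_pos (mul_pos hvk hwk),
    div_le_iff₀ (mul_pos hvk hwk)]
  calc |(v + d + k) * (w + k) - (v + k) * (w + d + k)| = |d| * |v - w| := by
        rw [← abs_mul, ← abs_neg (d * (v - w))]; congr 1; ring
    _ ≤ (v + k) * (w + k) * |v - w| := by gcongr; linarith
    _ = |v - w| * ((v + k) * (w + k)) := by ring

lemma pochhammerRatio_mem_Icc (hv : 0 < v) (hd : |d| ≤ v) (n : ℕ) :
    pochhammerRatio d v n ∈ Set.Icc (0 : ℝ) (2 ^ n) := by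
  induction n with
  | zero => simp [pochhammerRatio]
  | succ n ih =>
    obtain ⟨h₀, h₂⟩ := add_nat_div_add_nat_mem_Icc hv hd n
    rw [pochhammerRatio_succ, pow_succ]
    exact ⟨mul_nonneg ih.1 h₀, mul_le_mul ih.2 h₂ h₀ (by positivity)⟩

lemma abs_pochhammerRatio_sub_le (hv : 0 < v) (hw : 0 < w) (hdv : |d| ≤ v) (hdw : |d| ≤ w)
    (hd : |d| ≤ v * w) (n : ℕ) :
    |pochhammerRatio d v n - pochhammerRatio d w n| ≤ n * 2 ^ n * |v - w| := by
  induction n with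
  | zero => simp [pochhammerRatio]
  | succ n ih =>
    set f := fun u : ℝ => (u + d + n) / (u + n)
    have hf := add_nat_div_add_nat_mem_Icc hv hdv n
    have hrw := pochhammerRatio_mem_Icc hw hdw n
    have hf' := abs_add_nat_div_add_nat_sub_le hv hw hd n
    rw [pochhammerRatio_succ, pochhammerRatio_succ]
    calc |pochhammerRatio d v n * f v - pochhammerRatio d w n * f w|
        = |(pochhammerRatio d v n - pochhammerRatio d w n) * f v
            + pochhammerRatio d w n * (f v - f w)| := by ring_nf
      _ ≤ n * 2 ^ n * |v - w| * 2 + 2 ^ n * |v - w| := by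
        refine (abs_add_le _ _).trans (add_le_add ?_ ?_) <;> rw [abs_mul]
        · rw [abs_of_nonneg hf.1]; exact mul_le_mul ih hf.2 hf.1 (by positivity)
        · rw [abs_of_nonneg hrw.1]; exact mul_le_mul hrw.2 hf' (abs_nonneg _) (by positivity)
      _ ≤ ((n + 1 : ℕ) : ℝ) * 2 ^ (n + 1) * |v - w| := by
        push_cast; rw [pow_succ]; nlinarith [abs_nonneg (v - w), pow_pos (two_pos : (0:ℝ) < 2) n]

end Pochhammer

section Hypergeometric

noncomputable def gaussHypTerm (a d v t : ℝ) (n : ℕ) : ℝ :=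
  (ascPochhammer ℝ n).eval a / n ! * t ^ n * pochhammerRatio d v n

variable {a d v w t : ℝ}

lemma gaussHyp_eq_tsum (a d v t : ℝ) :
    gaussHyp a (v + d) v t = ∑' n, gaussHypTerm a d v t n := by
  unfold gaussHyp gaussHypTerm pochhammerRatio
  congr 1; ext n; ring

lemma gaussHypTerm_zero (a d v t : ℝ) : gaussHypTerm a d v t 0 = 1 := by
  simp [gaussHypTerm, pochhammerRatio]

lemma ascPochhammer_eval_div_factorial_mem_Icc (ha0 : 0 ≤ a) (ha1 : a ≤ 1) (n : ℕ) :
    (ascPochhammer ℝ n).eval a / n ! ∈ Set.Icc (0 : ℝ) 1 :=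
  ⟨div_nonneg (ascPochhammer_eval_nonneg ha0 n) n !.cast_nonneg,
    div_le_one_of_le₀ (ascPochhammer_eval_le_factorial ha0 ha1 n) n !.cast_nonneg⟩

lemma abs_gaussHypTerm_le (ha0 : 0 ≤ a) (ha1 : a ≤ 1) (hv : 0 < v) (hd : |d| ≤ v)
    (ht : 0 ≤ t) (n : ℕ) :
    |gaussHypTerm a d v t n| ≤ (2 * t) ^ n := by
  obtain ⟨hc₀, hc₁⟩ := ascPochhammer_eval_div_factorial_mem_Icc ha0 ha1 n
  obtain ⟨hr₀, hr₂⟩ := pochhammerRatio_mem_Icc hv hd n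
  rw [gaussHypTerm, abs_of_nonneg (by positivity)]
  calc _ ≤ 1 * t ^ n * 2 ^ n := by gcongr
    _ = (2 * t) ^ n := by ring

lemma abs_gaussHypTerm_sub_le (ha0 : 0 ≤ a) (ha1 : a ≤ 1) (hv : 0 < v) (hw : 0 < w)
    (hdv : |d| ≤ v) (hdw : |d| ≤ w) (hd : |d| ≤ v * w) (ht : 0 ≤ t) (n : ℕ) :
    |gaussHypTerm a d v t n - gaussHypTerm a d w t n| ≤ |v - w| * (n * (2 * t) ^ n) := by
  obtain ⟨hc₀, hc₁⟩ := ascPochhammer_eval_div_factorial_mem_Icc ha0 ha1 n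
  rw [gaussHypTerm, gaussHypTerm, ← mul_sub, abs_mul, abs_of_nonneg (by positivity)]
  calc _ ≤ 1 * t ^ n * (n * 2 ^ n * |v - w|) := by
        gcongr; exact abs_pochhammerRatio_sub_le hv hw hdv hdw hd n
    _ = _ := by ring

lemma summable_gaussHypTerm (ha0 : 0 ≤ a) (ha1 : a ≤ 1) (hv : 0 < v) (hd : |d| ≤ v)
    (ht0 : 0 ≤ t) (ht : t < 1 / 2) :
    Summable (gaussHypTerm a d v t) :=
  .of_norm_bounded (summable_geometric_of_lt_one (by positivity) (by linarith))
    (abs_gaussHypTerm_le ha0 ha1 hv hd ht0)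

lemma abs_gaussHyp_sub_one_le (ha0 : 0 ≤ a) (ha1 : a ≤ 1) (hv : 0 < v) (hd : |d| ≤ v)
    (ht0 : 0 ≤ t) (ht : t ≤ 1 / 4) :
    |gaussHyp a (v + d) v t - 1| ≤ 4 * t := by
  rw [gaussHyp_eq_tsum, (summable_gaussHypTerm ha0 ha1 hv hd ht0 (by linarith)).tsum_eq_zero_add,
    gaussHypTerm_zero, add_sub_cancel_left, ← Real.norm_eq_abs]
  calc _ ≤ 2 * t * (1 - 2 * t)⁻¹ :=
        tsum_of_norm_bounded ((hasSum_geometric_of_lt_one (by positivity) (by linarith)).mul_left _)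
          fun n => (abs_gaussHypTerm_le ha0 ha1 hv hd ht0 (n + 1)).trans_eq (pow_succ' _ _)
    _ ≤ 4 * t := by
        rw [← div_eq_mul_inv, div_le_iff₀ (by linarith)]; nlinarith

lemma abs_gaussHyp_sub_le (ha0 : 0 ≤ a) (ha1 : a ≤ 1) (hv : 0 < v) (hw : 0 < w)
    (hdv : |d| ≤ v) (hdw : |d| ≤ w) (hd : |d| ≤ v * w) (ht0 : 0 ≤ t) (ht : t ≤ 1 / 4) :
    |gaussHyp a (v + d) v t - gaussHyp a (w + d) w t| ≤ 8 * t * |v - w| := by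
  rw [gaussHyp_eq_tsum, gaussHyp_eq_tsum,
    ← (summable_gaussHypTerm ha0 ha1 hv hdv ht0 (by linarith)).tsum_sub
      (summable_gaussHypTerm ha0 ha1 hw hdw ht0 (by linarith)), ← Real.norm_eq_abs]
  have h2t : ‖2 * t‖ < 1 := by rw [Real.norm_eq_abs, abs_of_nonneg (by positivity)]; linarith
  calc _ ≤ |v - w| * (2 * t / (1 - 2 * t) ^ 2) :=
        tsum_of_norm_bounded ((hasSum_coe_mul_geometric_of_norm_lt_one h2t).mul_left _)
          (abs_gaussHypTerm_sub_le ha0 ha1 hv hw hdv hdw hd ht0)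
    _ ≤ 8 * t * |v - w| := by
        have h : 1 / 4 ≤ (1 - 2 * t) ^ 2 := by nlinarith
        rw [mul_comm, div_mul_eq_mul_div, div_le_iff₀ (by linarith)]
        nlinarith [mul_nonneg ht0 (abs_nonneg (v - w))]

end Hypergeometric

lemma abs_bracket_sub_inv_sq_le {x y Fx Fy Gx Gy t : ℝ} (hx : 0 ≤ x) (hy : -(1 / 4) ≤ y)
    (hxy : x ≠ y) (ht : t ≤ 1 / 4) (hFx : |Fx - 1| ≤ 4 * t) (hGx : |Gx - 1| ≤ 4 * t)
    (hGy : |Gy - 1| ≤ 4 * t) (hF : |Fx - Fy| ≤ 8 * t * |x - y|)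
    (hG : |Gx - Gy| ≤ 8 * t * |x - y|) :
    |1 / (x - y) * (1 / (y + 1) * Fx * Gy - 1 / (x + 1) * Fy * Gx) - 1 / (x + 1) ^ 2|
      ≤ 48 * t + 2 * |x - y| := by
  have ht0 : 0 ≤ t := by linarith [abs_nonneg (Fx - 1)]
  have hD : 0 < |x - y| := abs_pos.mpr (sub_ne_zero.mpr hxy)
  have hI : 1 ≤ x + 1 := by linarith
  have hJ : 3 / 4 ≤ y + 1 := by linarith
  have hFx2 : |Fx| ≤ 2 := by linarith [abs_sub_abs_le_abs_sub Fx 1, abs_one (α := ℝ)]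
  have hGx2 : |Gx| ≤ 2 := by linarith [abs_sub_abs_le_abs_sub Gx 1, abs_one (α := ℝ)]
  have hGy2 : |Gy| ≤ 2 := by linarith [abs_sub_abs_le_abs_sub Gy 1, abs_one (α := ℝ)]
  have hIJ : 3 / 4 ≤ (x + 1) * (y + 1) := by nlinarith
  have hI2J : 3 / 4 ≤ (x + 1) ^ 2 * (y + 1) := by nlinarith
  -- the first two terms add up to `Fx Gy / ((x+1)(y+1)) - 1/(x+1)²`; in the third, the
  -- singular factor `1/(x - y)` is compensated by the Lipschitz bounds `hF`, `hG`
  have hsplit : 1 / (x - y) * (1 / (y + 1) * Fx * Gy - 1 / (x + 1) * Fy * Gx) - 1 / (x + 1) ^ 2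
      = ((Fx - 1) * Gy + (Gy - 1)) / ((x + 1) * (y + 1)) + (x - y) / ((x + 1) ^ 2 * (y + 1))
        + (Fx * (Gy - Gx) + Gx * (Fx - Fy)) / ((x + 1) * (x - y)) := by
    field_simp [sub_ne_zero.mpr hxy]
    ring
  have hprod : |(Fx - 1) * Gy + (Gy - 1)| ≤ 12 * t := by
    calc _ ≤ |Fx - 1| * |Gy| + |Gy - 1| := by rw [← abs_mul]; exact abs_add_le _ _
      _ ≤ 4 * t * 2 + 4 * t := by gcongr
      _ = 12 * t := by ring
  have hcross : |Fx * (Gy - Gx) + Gx * (Fx - Fy)| ≤ 32 * t * |x - y| := by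
    calc _ ≤ |Fx| * |Gx - Gy| + |Gx| * |Fx - Fy| := by
          rw [abs_sub_comm Gx, ← abs_mul, ← abs_mul]; exact abs_add_le _ _
      _ ≤ 2 * (8 * t * |x - y|) + 2 * (8 * t * |x - y|) := by gcongr
      _ = 32 * t * |x - y| := by ring
  rw [hsplit]
  refine (abs_add_le _ _).trans ?_
  refine (add_le_add (abs_add_le _ _) le_rfl).trans ?_
  rw [abs_div, abs_div, abs_div, abs_of_pos (by linarith : (0 : ℝ) < (x + 1) * (y + 1)),
    abs_of_pos (by linarith : (0 : ℝ) < (x + 1) ^ 2 * (y + 1)), abs_mul,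
    abs_of_pos (by linarith : (0 : ℝ) < x + 1)]
  have h₁ : |(Fx - 1) * Gy + (Gy - 1)| / ((x + 1) * (y + 1)) ≤ 16 * t := by
    rw [div_le_iff₀ (by linarith)]; nlinarith
  have h₂ : |x - y| / ((x + 1) ^ 2 * (y + 1)) ≤ 2 * |x - y| := by
    rw [div_le_iff₀ (by linarith)]; nlinarith
  have h₃ : |Fx * (Gy - Gx) + Gx * (Fx - Fy)| / ((x + 1) * |x - y|) ≤ 32 * t := by
    rw [div_le_iff₀ (by positivity)]
    nlinarith [mul_le_mul_of_nonneg_left hI (by positivity : 0 ≤ 32 * t * |x - y|)]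
  linarith

lemma Real.continuousAt_Gamma_of_pos {s : ℝ} (hs : 0 < s) : ContinuousAt Gamma s :=
  (differentiableOn_Gamma_Ioi.differentiableAt (Ioi_mem_nhds hs)).continuousAt

lemma Real.Gamma_add_nat_eq_ascPochhammer_eval_mul {x : ℝ} (hx : 0 < x) (n : ℕ) :
    Gamma (x + n) = (ascPochhammer ℝ n).eval x * Gamma x := by
  induction n with
  | zero => simp
  | succ n ih =>
    rw [cast_succ, ← add_assoc, Gamma_add_one (by positivity), ih, ascPochhammer_succ_eval]
    ring

section Kernel

noncomputable def kernelPrefactor (i : ℕ) (j t : ℝ) : ℝ :=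
  ((ascPochhammer ℝ (i + 1)).eval (-(1/2)) * (Real.Gamma (j + 3/2) / Real.Gamma (1/2)) /
      ((i.factorial : ℝ) * Real.Gamma (j + 1))) * t ^ (((i : ℝ) + j) / 2 + 1)

noncomputable def kernelBracket (i : ℕ) (j t : ℝ) : ℝ :=
  1 / ((i : ℝ) - j) *
    ((1 / (j + 1)) * gaussHyp (1/2) ((i : ℝ) + 3/2) ((i : ℝ) + 1) t *
        gaussHyp (1/2) (j + 1/2) (j + 2) t
      - (1 / ((i : ℝ) + 1)) * gaussHyp (1/2) (j + 3/2) (j + 1) t *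
        gaussHyp (1/2) ((i : ℝ) + 1/2) ((i : ℝ) + 2) t)

noncomputable def diagCoeff (i : ℕ) : ℝ :=
  (ascPochhammer ℝ (i + 1)).eval (1/2 : ℝ) * (ascPochhammer ℝ (i + 1)).eval (-(1/2) : ℝ) /
    ((i + 1).factorial : ℝ) ^ 2

variable (i : ℕ) {j t : ℝ}

lemma kernelExpr_eq_mul (j t : ℝ) :
    kernelExpr i j t = kernelPrefactor i j t * kernelBracket i j t := by
  simp only [kernelExpr, kernelPrefactor, kernelBracket, mul_assoc]

lemma diagCoeff_neg : diagCoeff i < 0 := by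
  have h := ascPochhammer_pos i (1 / 2 : ℝ) (by norm_num)
  have h' := ascPochhammer_pos (i + 1) (1 / 2 : ℝ) (by norm_num)
  rw [diagCoeff, ascPochhammer_succ_eval_neg_half]
  apply div_neg_of_neg_of_pos (by nlinarith) (by positivity)

lemma abs_diagCoeff_le_one : |diagCoeff i| ≤ 1 := by
  have h := ascPochhammer_eval_le_factorial (x := 1 / 2) (by norm_num) (by norm_num) i
  have h' := ascPochhammer_eval_le_factorial (x := 1 / 2) (by norm_num) (by norm_num) (i + 1)
  have hpos := ascPochhammer_pos i (1 / 2 : ℝ) (by norm_num)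
  have hfac : (i ! : ℝ) ≤ (i + 1)! := by exact_mod_cast factorial_le (le_succ i)
  rw [abs_of_neg (diagCoeff_neg i), neg_le, diagCoeff, ascPochhammer_succ_eval_neg_half,
    le_div_iff₀ (by positivity)]
  nlinarith [mul_le_mul h' (h.trans hfac) hpos.le (by positivity)]

lemma kernelPrefactor_self (ht : 0 < t) :
    kernelPrefactor i i t = ((i : ℝ) + 1) ^ 2 * diagCoeff i * t ^ (i + 1) := by
  have hΓ : Gamma ((i : ℝ) + 3 / 2) =
      (ascPochhammer ℝ (i + 1)).eval (1 / 2) * Gamma (1 / 2) := by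
    rw [← Gamma_add_nat_eq_ascPochhammer_eval_mul (by norm_num)]; push_cast; ring_nf
  have hpow : t ^ (((i : ℝ) + i) / 2 + 1) = t ^ (i + 1) := by
    rw [← rpow_natCast]; push_cast; ring_nf
  have hΓ₀ : Gamma (1 / 2) ≠ 0 := (Gamma_pos_of_pos (by norm_num)).ne'
  rw [kernelPrefactor, diagCoeff, hΓ, hpow, Gamma_nat_eq_factorial, factorial_succ]
  push_cast
  field_simp

lemma continuousAt_kernelPrefactor (ht : 0 < t) :
    ContinuousAt (fun j => kernelPrefactor i j t) i := by
  have hΓ₁ : ContinuousAt (fun j : ℝ => Gamma (j + 3 / 2)) i :=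
    (continuousAt_Gamma_of_pos (by positivity)).comp (continuousAt_id.add continuousAt_const)
  have hΓ₂ : ContinuousAt (fun j : ℝ => Gamma (j + 1)) i :=
    (continuousAt_Gamma_of_pos (by positivity)).comp (continuousAt_id.add continuousAt_const)
  have hΓ₂₀ : Gamma ((i : ℝ) + 1) ≠ 0 := (Gamma_pos_of_pos (by positivity)).ne'
  have hpow : ContinuousAt (fun j : ℝ => t ^ (((i : ℝ) + j) / 2 + 1)) i :=
    (continuousAt_const_rpow ht.ne').comp (by fun_prop)
  unfold kernelPrefactor
  exact ((continuousAt_const.mul (hΓ₁.div_const _)).div (continuousAt_const.mul hΓ₂)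
    (mul_ne_zero (by positivity) hΓ₂₀)).mul hpow

lemma abs_kernelBracket_sub_le (hj : |j - i| ≤ 1 / 4) (hji : j ≠ i) (ht0 : 0 ≤ t)
    (ht : t ≤ 1 / 4) :
    |kernelBracket i j t - 1 / ((i : ℝ) + 1) ^ 2| ≤ 48 * t + 2 * |(i : ℝ) - j| := by
  have hi : (0 : ℝ) ≤ i := i.cast_nonneg
  obtain ⟨hj₁, -⟩ := abs_le.mp hj
  have hF (x : ℝ) : gaussHyp (1 / 2) (x + 3 / 2) (x + 1) t
      = gaussHyp (1 / 2) ((x + 1) + 1 / 2) (x + 1) t := by ring_nf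
  have hG (x : ℝ) : gaussHyp (1 / 2) (x + 1 / 2) (x + 2) t
      = gaussHyp (1 / 2) ((x + 2) + -(3 / 2)) (x + 2) t := by ring_nf
  have ha : (0 : ℝ) ≤ 1 / 2 ∧ (1 / 2 : ℝ) ≤ 1 := by norm_num
  have h₁ : |(1 / 2 : ℝ)| = 1 / 2 := abs_of_pos (by norm_num)
  have h₃ : |-(3 / 2 : ℝ)| = 3 / 2 := by norm_num
  unfold kernelBracket
  rw [hF, hF, hG, hG]
  refine abs_bracket_sub_inv_sq_le hi (by linarith) (Ne.symm hji) ht ?_ ?_ ?_ ?_ ?_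
  · exact abs_gaussHyp_sub_one_le ha.1 ha.2 (by positivity) (by rw [h₁]; linarith) ht0 ht
  · exact abs_gaussHyp_sub_one_le ha.1 ha.2 (by positivity) (by rw [h₃]; linarith) ht0 ht
  · exact abs_gaussHyp_sub_one_le ha.1 ha.2 (by linarith) (by rw [h₃]; linarith) ht0 ht
  · rw [← add_sub_add_right_eq_sub (i : ℝ) j 1]
    exact abs_gaussHyp_sub_le ha.1 ha.2 (by positivity) (by linarith) (by rw [h₁]; linarith)
      (by rw [h₁]; linarith) (by rw [h₁]; nlinarith) ht0 ht
  · rw [← add_sub_add_right_eq_sub (i : ℝ) j 2]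
    exact abs_gaussHyp_sub_le ha.1 ha.2 (by positivity) (by linarith) (by rw [h₃]; linarith)
      (by rw [h₃]; linarith) (by rw [h₃]; nlinarith) ht0 ht

lemma abs_sub_diagCoeff_mul_pow_le {k : ℝ} (ht0 : 0 < t) (ht : t ≤ 1 / 4)
    (hK : Tendsto (fun j => kernelExpr i j t) (𝓝[≠] (i : ℝ)) (𝓝 k)) :
    |k - diagCoeff i * t ^ (i + 1)| ≤ 48 * ((i : ℝ) + 1) ^ 2 * |diagCoeff i| * t ^ (i + 2) := by
  set A := kernelPrefactor i i t
  have hA : A = ((i : ℝ) + 1) ^ 2 * diagCoeff i * t ^ (i + 1) := kernelPrefactor_self i ht0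
  have hA₀ : A ≠ 0 := by
    rw [hA]; exact mul_ne_zero (mul_ne_zero (by positivity) (diagCoeff_neg i).ne) (by positivity)
  have hAlim : Tendsto (fun j => kernelPrefactor i j t) (𝓝[≠] (i : ℝ)) (𝓝 A) :=
    (continuousAt_kernelPrefactor i ht0).tendsto.mono_left nhdsWithin_le_nhds
  have hB : Tendsto (fun j => kernelBracket i j t) (𝓝[≠] (i : ℝ)) (𝓝 (k / A)) := by
    refine (hK.div hAlim hA₀).congr' ?_
    filter_upwards [hAlim.eventually_ne hA₀] with j hj
    rw [Pi.div_apply, kernelExpr_eq_mul, mul_div_cancel_left₀ _ hj]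
  have hnear : ∀ᶠ j : ℝ in 𝓝[≠] (i : ℝ), |j - i| ≤ 1 / 4 ∧ j ≠ i := by
    have hball := Metric.closedBall_mem_nhds (i : ℝ) (by norm_num : (0 : ℝ) < 1 / 4)
    filter_upwards [nhdsWithin_le_nhds hball, self_mem_nhdsWithin] with j hj hji
    exact ⟨hj, hji⟩
  have hbound : |k / A - 1 / ((i : ℝ) + 1) ^ 2| ≤ 48 * t := by
    have hlim :
        Tendsto (fun j : ℝ => 48 * t + 2 * |(i : ℝ) - j|) (𝓝[≠] (i : ℝ)) (𝓝 (48 * t)) := by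
      refine tendsto_nhdsWithin_of_tendsto_nhds ?_
      have : Continuous fun j : ℝ => 48 * t + 2 * |(i : ℝ) - j| := by fun_prop
      simpa using this.tendsto (i : ℝ)
    refine le_of_tendsto_of_tendsto (hB.sub_const _).abs hlim ?_
    filter_upwards [hnear] with j hj
    exact abs_kernelBracket_sub_le i hj.1 hj.2 ht0.le ht
  have hsplit : k - diagCoeff i * t ^ (i + 1) = A * (k / A - 1 / ((i : ℝ) + 1) ^ 2) := by
    rw [mul_sub, mul_div_cancel₀ _ hA₀, hA]
    field_simp
  rw [hsplit, abs_mul]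
  calc _ ≤ |A| * (48 * t) := by gcongr
    _ = _ := by
      rw [hA, abs_mul, abs_mul, abs_of_pos (by positivity : (0 : ℝ) < ((i : ℝ) + 1) ^ 2),
        abs_of_pos (by positivity : (0 : ℝ) < t ^ (i + 1))]
      ring

end Kernel

lemma tendsto_div_const_mul_pow_of_isBigO {g : ℝ → ℝ} {c : ℝ} (hc : c ≠ 0) (k : ℕ)
    (hg : (fun t => g t - c * t ^ k) =O[𝓝[>] 0] fun t => t ^ (k + 1)) :
    Tendsto (fun t => g t / (c * t ^ k)) (𝓝[>] 0) (𝓝 1) := by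
  have hlo : (fun t : ℝ => t ^ (k + 1)) =o[𝓝[>] 0] fun t => c * t ^ k :=
    ((Asymptotics.isLittleO_pow_pow k.lt_succ_self).mono nhdsWithin_le_nhds).trans_isBigO
      (Asymptotics.isBigO_self_const_mul hc _ _)
  have hne : ∀ᶠ t in 𝓝[>] (0 : ℝ), c * t ^ k ≠ 0 := by
    filter_upwards [self_mem_nhdsWithin] with t ht
    exact mul_ne_zero hc (pow_ne_zero _ (ne_of_gt ht))
  exact (Asymptotics.isEquivalent_iff_tendsto_one hne).mp (hg.trans_isLittleO hlo)

section DiagonalSum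

def IsKernelDiagonal (Kd : ℕ → ℝ → ℝ) : Prop :=
  ∀ (i : ℕ) (t : ℝ), 0 < t → t < 1 →
    Tendsto (fun j => kernelExpr i j t) (𝓝[≠] (i : ℝ)) (𝓝 (Kd i t))

variable {Kd : ℕ → ℝ → ℝ}

lemma isBigO_diag_sub_diagCoeff_mul_pow
    (hK : IsKernelDiagonal Kd) (i : ℕ) :
    (fun t => Kd i t - diagCoeff i * t ^ (i + 1)) =O[𝓝[>] 0] fun t => t ^ (i + 2) := by
  refine Asymptotics.IsBigO.of_bound (48 * ((i : ℝ) + 1) ^ 2 * |diagCoeff i|) ?_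
  filter_upwards [Ioo_mem_nhdsGT (by norm_num : (0 : ℝ) < 1 / 4)] with t ⟨ht0, ht⟩
  rw [Real.norm_eq_abs, Real.norm_eq_abs, abs_of_pos (pow_pos ht0 _)]
  exact abs_sub_diagCoeff_mul_pow_le i ht0 ht.le (hK i t ht0 (by linarith))

lemma abs_diag_le
    (hK : IsKernelDiagonal Kd)
    (m : ℕ) {t : ℝ} (ht0 : 0 < t) (ht : t ≤ 1 / 16) :
    |Kd m t| ≤ (4 * t) ^ (m + 1) := by
  have h := abs_sub_diagCoeff_mul_pow_le m ht0 (by linarith) (hK m t ht0 (by linarith))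
  have hc := abs_diagCoeff_le_one m
  have hsq : ((m : ℝ) + 1) ^ 2 ≤ 4 ^ m := by
    have : (m : ℝ) + 1 ≤ 2 ^ m := by exact_mod_cast Nat.lt_two_pow_self
    calc ((m : ℝ) + 1) ^ 2 ≤ (2 ^ m) ^ 2 := by gcongr
      _ = 4 ^ m := by rw [← pow_mul, mul_comm, pow_mul]; norm_num
  have htm : 0 < t ^ (m + 1) := pow_pos ht0 _
  have hmain := abs_sub_abs_le_abs_sub (Kd m t) (diagCoeff m * t ^ (m + 1))
  rw [abs_mul, abs_of_pos htm] at hmain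
  calc |Kd m t| ≤ 48 * ((m : ℝ) + 1) ^ 2 * |diagCoeff m| * t ^ (m + 2)
        + |diagCoeff m| * t ^ (m + 1) := by linarith
    _ ≤ 48 * 4 ^ m * 1 * (t * t ^ (m + 1)) + 1 * t ^ (m + 1) := by
        rw [pow_succ' t (m + 1)]; gcongr
    _ ≤ (4 * t) ^ (m + 1) := by
        have h4 : t ^ (m + 1) ≤ 4 ^ m * t ^ (m + 1) :=
          le_mul_of_one_le_left htm.le (one_le_pow₀ (by norm_num))
        have h48 :=
          mul_le_mul_of_nonneg_left ht (by positivity : (0 : ℝ) ≤ 48 * 4 ^ m * t ^ (m + 1))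
        rw [mul_pow, pow_succ' (4 : ℝ)]
        nlinarith

lemma summable_diag
    (hK : IsKernelDiagonal Kd)
    (n : ℕ) {t : ℝ} (ht0 : 0 < t) (ht : t ≤ 1 / 16) :
    Summable fun m => Kd (n + m) t :=
  .of_norm_bounded
    ((summable_geometric_of_lt_one (r := 4 * t) (by positivity) (by linarith)).mul_left
      ((4 * t) ^ (n + 1)))
    fun m => (abs_diag_le hK (n + m) ht0 ht).trans_eq (by ring)

lemma isBigO_tsum_diag_succ
    (hK : IsKernelDiagonal Kd) (n : ℕ) :
    (fun t => ∑' m, Kd (n + (m + 1)) t) =O[𝓝[>] 0] fun t => t ^ (n + 2) := by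
  refine Asymptotics.IsBigO.of_bound (2 * 4 ^ (n + 2)) ?_
  filter_upwards [Ioo_mem_nhdsGT (by norm_num : (0 : ℝ) < 1 / 16)] with t ⟨ht0, ht⟩
  rw [Real.norm_eq_abs (t ^ _), abs_of_pos (pow_pos ht0 _)]
  calc _ ≤ (4 * t) ^ (n + 2) * (1 - 4 * t)⁻¹ :=
        tsum_of_norm_bounded
          ((hasSum_geometric_of_lt_one (by positivity) (by linarith)).mul_left _)
          fun m => (abs_diag_le hK (n + (m + 1)) ht0 ht.le).trans_eq (by ring)
    _ ≤ 2 * 4 ^ (n + 2) * t ^ (n + 2) := by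
        have hP : 0 < 4 ^ (n + 2) * t ^ (n + 2) := by positivity
        rw [mul_pow, ← div_eq_mul_inv, div_le_iff₀ (by linarith)]
        nlinarith

end DiagonalSum

/-- Leading small-`t` behaviour of the discrete form factor sum for `p = 1`:
`K(i,i) ~ [(1/2)_{i+1}(-1/2)_{i+1}/((i+1)!)²] t^{i+1}` as `t → 0⁺`, and consequently
`∑_{n₁ ≥ n} K(n₁,n₁) ~ [(1/2)_{n+1}(-1/2)_{n+1}/((n+1)!)²] t^{n+1}` as `t → 0⁺`. -/
theorem diagonal_kernel_small_t (Kd : ℕ → ℝ → ℝ)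
    (hK : ∀ (i : ℕ) (t : ℝ), 0 < t → t < 1 →
      Tendsto (fun j => kernelExpr i j t) (𝓝[≠] (i : ℝ)) (𝓝 (Kd i t)))
    (i n : ℕ) :
    Tendsto (fun t : ℝ => Kd i t /
        (((ascPochhammer ℝ (i + 1)).eval (1/2 : ℝ) * (ascPochhammer ℝ (i + 1)).eval (-(1/2) : ℝ) /
          ((i + 1).factorial : ℝ) ^ 2) * t ^ (i + 1))) (𝓝[>] (0:ℝ)) (𝓝 1) ∧
    Tendsto (fun t : ℝ => (∑' m : ℕ, Kd (n + m) t) /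
        (((ascPochhammer ℝ (n + 1)).eval (1/2 : ℝ) * (ascPochhammer ℝ (n + 1)).eval (-(1/2) : ℝ) /
          ((n + 1).factorial : ℝ) ^ 2) * t ^ (n + 1))) (𝓝[>] (0:ℝ)) (𝓝 1) := by
  refine ⟨tendsto_div_const_mul_pow_of_isBigO (diagCoeff_neg i).ne (i + 1)
    (isBigO_diag_sub_diagCoeff_mul_pow hK i), ?_⟩
  refine tendsto_div_const_mul_pow_of_isBigO (diagCoeff_neg n).ne (n + 1) ?_
  refine ((isBigO_diag_sub_diagCoeff_mul_pow hK n).add (isBigO_tsum_diag_succ hK n)).congr' ?_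
    EventuallyEq.rfl
  filter_upwards [Ioo_mem_nhdsGT (by norm_num : (0 : ℝ) < 1 / 16)] with t ⟨ht0, ht⟩
  rw [(summable_diag hK n ht0 ht.le).tsum_eq_zero_add, add_zero]
  ring
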